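/- For q ∈ {5, 11, 17, 23}, the code L(q) is spanned over GF(3) by its (0,1)-codewords of weight q+1; equivalently, the GF(3)-row span of the block-by-point incidence matrix of the Hadamard 3-design D(q) equals L(q) (the incidence matrix of D(q) has 3-rank q+1). -/

import Mathlib

open Matrix Finset

/-- The Pless matrix `S_q`, with rows and columns indexed by `GF(q) ∪ {∞}`
(`none` playing the role of `∞`), built from the quadratic character of `GF(q)`. -/
def Smat (F : Type) [Field F] [Fintype F] [DecidableEq F] :
    Matrix (Option F) (Option F) ℤ := fun i j =>
  match i, j with
  | none, none => 0
  | none, some _ => 1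
  | some _, none => quadraticChar F (-1)
  | some a, some b => quadraticChar F (a - b)

/-- The matrix `U_q`, obtained from `S_q` by replacing each entry `s_{a,∞}`
(`a ∈ GF(q)`) in the column labeled `∞` by `-1`. -/
def Umat (F : Type) [Field F] [Fintype F] [DecidableEq F] :
    Matrix (Option F) (Option F) ℤ := fun i j =>
  match i, j with
  | some _, none => -1
  | i, j => Smat F i j

/-- The row of the generator matrix `(I | U_q)` of the code `L(q)`,
reduced modulo 3, indexed by `i : Option F`. -/
def genRowL (F : Type) [Field F] [Fintype F] [DecidableEq F] (i : Option F) :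
    (Option F ⊕ Option F) → ZMod 3 := fun j =>
  match j with
  | Sum.inl k => if i = k then 1 else 0
  | Sum.inr k => ((Umat F i k : ℤ) : ZMod 3)

/-- The code `L(q)`: the ternary code of length `2q+2` spanned by the rows of
`(I | U_q)` reduced modulo 3; it is monomially equivalent to the Pless symmetry code. -/
def Lcode (F : Type) [Field F] [Fintype F] [DecidableEq F] :
    Submodule (ZMod 3) ((Option F ⊕ Option F) → ZMod 3) :=
  Submodule.span (ZMod 3) (Set.range (genRowL F))

/-- The Hadamard matrix `H = [[I − U_qᵀ, U_q + I], [I + U_qᵀ, U_q − I]]`. -/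
def Hmat (F : Type) [Field F] [Fintype F] [DecidableEq F] :
    Matrix (Option F ⊕ Option F) (Option F ⊕ Option F) ℤ :=
  Matrix.fromBlocks (1 - (Umat F)ᵀ) (Umat F + 1) (1 + (Umat F)ᵀ) (Umat F - 1)

/-- The vector `r + 2·1̄` over `GF(3)`, where `r` is the row of `H` (if `s = true`)
or of `−H` (if `s = false`) indexed by `i`, reduced modulo 3. -/
def dvec (F : Type) [Field F] [Fintype F] [DecidableEq F]
    (s : Bool) (i : Option F ⊕ Option F) : (Option F ⊕ Option F) → ZMod 3 := fun j =>
  (if s then 1 else -1) * ((Hmat F i j : ℤ) : ZMod 3) + 2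

/-!
Over `ℤ`, `U_qᵀ U_q = q I`: off the diagonal this is the autocorrelation
`∑ₐ χ(a - b) χ(a - b') = -1` of the quadratic character, a rescaled Jacobi sum `J(χ, χ)`.
For `q ≡ 2 (mod 3)` this reads `U_qᵀ U_q = -I` over `GF(3)`, so the rows `d_a` of `(-U_qᵀ | I)`
lie in `L(q)`. Modulo 3 the rows of `H` are `g_a ± d_a`, with `g_a` the rows of `(I | U_q)`, and
the excluded row is `1̄`; hence every block vector `±r + 2·1̄` lies in `L(q)`. Conversely the two
block vectors `r + 2·1̄` and `-r + 2·1̄` add up to `1̄`, so the blocks span `1̄`, then every row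
`g_a ± d_a` of `H`, then every `g_a`. Finally each row of `H` other than `1̄` has zero sum, so it has
`q + 1` entries of each sign, and the block vectors are `(0,1)`-codewords of weight `q + 1`.
-/

lemma two_mul_card_filter_eq_of_sum_eq_zero {ι : Type*} [Fintype ι] {f : ι → ℤ}
    (hf : ∀ i, f i = 1 ∨ f i = -1) (hsum : ∑ i, f i = 0) {c : ℤ} (hc : c = 1 ∨ c = -1) :
    2 * #{i | f i = c} = Fintype.card ι := by
  have hterm : ∀ i, f i * c = 2 * (if f i = c then 1 else 0) - 1 := fun i => by
    rcases hf i with h | h <;> rcases hc with rfl | rfl <;> simp [h]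
  have : ∑ i, f i * c = 0 := by rw [← sum_mul, hsum, zero_mul]
  rw [Fintype.sum_congr _ _ hterm, sum_sub_distrib, ← mul_sum, sum_boole] at this
  simp only [sum_const, card_univ, nsmul_eq_mul, mul_one] at this
  exact_mod_cast (sub_eq_zero.1 this)

section QuadraticCharSums
variable {F : Type*} [Field F] [Fintype F] [DecidableEq F]

lemma sum_quadraticChar_sub_right (hF : ringChar F ≠ 2) (b : F) :
    ∑ a : F, quadraticChar F (a - b) = 0 :=
  ((Equiv.subRight b).sum_comp _).trans (quadraticChar_sum_zero hF)

lemma sum_quadraticChar_sub_left (hF : ringChar F ≠ 2) (b : F) :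
    ∑ a : F, quadraticChar F (b - a) = 0 :=
  ((Equiv.subLeft b).sum_comp _).trans (quadraticChar_sum_zero hF)

lemma quadraticChar_mul_self (x : F) :
    quadraticChar F x * quadraticChar F x = if x = 0 then 0 else 1 := by
  split_ifs with hx
  · simp [hx]
  · rw [← sq, quadraticChar_sq_one hx]

lemma jacobiSum_quadraticChar (hF : ringChar F ≠ 2) :
    ∑ x : F, quadraticChar F x * quadraticChar F (1 - x) = -quadraticChar F (-1) := by
  have := jacobiSum_nontrivial_inv (quadraticChar_ne_one hF)
  rwa [(quadraticChar_isQuadratic F).inv] at this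

lemma sum_quadraticChar_sub_mul_sub (hF : ringChar F ≠ 2) (b b' : F) :
    ∑ a : F, quadraticChar F (a - b) * quadraticChar F (a - b') =
      if b = b' then (Fintype.card F : ℤ) - 1 else -1 := by
  split_ifs with h
  · subst h
    simp_rw [quadraticChar_mul_self, sub_eq_zero]
    simp [sum_ite, filter_ne', card_univ, Nat.cast_pred (Fintype.card_pos_iff.2 ⟨b⟩)]
  · have hc : b' - b ≠ 0 := sub_ne_zero.2 (Ne.symm h)
    have hneg : (-1 : F) ≠ 0 := neg_ne_zero.2 one_ne_zero
    calc ∑ a : F, quadraticChar F (a - b) * quadraticChar F (a - b')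
        = ∑ x : F, quadraticChar F (b + (b' - b) * x - b) *
            quadraticChar F (b + (b' - b) * x - b') :=
          (((Equiv.mulLeft₀ _ hc).trans (Equiv.addLeft b)).sum_comp _).symm
      _ = ∑ x : F, quadraticChar F (-1) * (quadraticChar F x * quadraticChar F (1 - x)) := by
          refine sum_congr rfl fun x _ => ?_
          rw [show b + (b' - b) * x - b = (b' - b) * x by ring,
            show b + (b' - b) * x - b' = (b' - b) * (-1) * (1 - x) by ring]
          simp only [map_mul]
          linear_combination (quadraticChar F (-1) * quadraticChar F x *
            quadraticChar F (1 - x)) * quadraticChar_sq_one hc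
      _ = -1 := by
          rw [← mul_sum, jacobiSum_quadraticChar hF, mul_neg, ← sq, quadraticChar_sq_one hneg]

end QuadraticCharSums

section PlessMatrix
variable {F : Type} [Field F] [Fintype F] [DecidableEq F]

@[simp] lemma Umat_none_none : Umat F none none = 0 := rfl
@[simp] lemma Umat_none_some (b : F) : Umat F none (some b) = 1 := rfl
@[simp] lemma Umat_some_none (a : F) : Umat F (some a) none = -1 := rfl
@[simp] lemma Umat_some_some (a b : F) : Umat F (some a) (some b) = quadraticChar F (a - b) := rfl

@[simp] lemma Umat_self (i : Option F) : Umat F i i = 0 := by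
  cases i <;> simp

lemma Umat_eq_one_or_neg_one {i j : Option F} (h : i ≠ j) :
    Umat F i j = 1 ∨ Umat F i j = -1 := by
  rcases i with _ | a <;> rcases j with _ | b
  · exact absurd rfl h
  · exact .inl rfl
  · exact .inr rfl
  · exact quadraticChar_dichotomy (sub_ne_zero.2 fun hab => h (congrArg some hab))

lemma sum_Umat_col_none : ∑ i, Umat F i none = -Fintype.card F := by
  simp [Fintype.sum_option, card_univ]

lemma sum_Umat_col_some (hF : ringChar F ≠ 2) (b : F) : ∑ i, Umat F i (some b) = 1 := by
  simp [Fintype.sum_option, sum_quadraticChar_sub_right hF, -quadraticChar_apply]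

lemma sum_Umat_row_none : ∑ j, Umat F none j = Fintype.card F := by
  simp [Fintype.sum_option, card_univ]

lemma sum_Umat_row_some (hF : ringChar F ≠ 2) (a : F) : ∑ j, Umat F (some a) j = -1 := by
  simp [Fintype.sum_option, sum_quadraticChar_sub_left hF, -quadraticChar_apply]

lemma transpose_Umat_mul_Umat (hF : ringChar F ≠ 2) :
    (Umat F)ᵀ * Umat F = (Fintype.card F : ℤ) • 1 := by
  ext (_ | a) (_ | b)
  · simp [mul_apply, Fintype.sum_option, card_univ]
  · simp [mul_apply, Fintype.sum_option, sum_quadraticChar_sub_right hF, -quadraticChar_apply]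
  · simp [mul_apply, Fintype.sum_option, sum_quadraticChar_sub_right hF, -quadraticChar_apply]
  · simp only [mul_apply, transpose_apply, Fintype.sum_option, Umat_none_some, mul_one,
      Umat_some_some, sum_quadraticChar_sub_mul_sub hF, Matrix.smul_apply, one_apply,
      Option.some.injEq, smul_eq_mul]
    split_ifs <;> ring

@[simp] lemma Hmat_inl_inl (a k : Option F) :
    Hmat F (Sum.inl a) (Sum.inl k) = (if a = k then 1 else 0) - Umat F k a := by
  simp [Hmat, one_apply]

@[simp] lemma Hmat_inl_inr (a k : Option F) :
    Hmat F (Sum.inl a) (Sum.inr k) = Umat F a k + if a = k then 1 else 0 := by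
  simp [Hmat, one_apply]

@[simp] lemma Hmat_inr_inl (a k : Option F) :
    Hmat F (Sum.inr a) (Sum.inl k) = (if a = k then 1 else 0) + Umat F k a := by
  simp [Hmat, one_apply]

@[simp] lemma Hmat_inr_inr (a k : Option F) :
    Hmat F (Sum.inr a) (Sum.inr k) = Umat F a k - if a = k then 1 else 0 := by
  simp [Hmat, one_apply]

lemma Hmat_eq_one_or_neg_one (i j : Option F ⊕ Option F) :
    Hmat F i j = 1 ∨ Hmat F i j = -1 := by
  rcases i with a | a <;> rcases j with k | k <;> by_cases hak : a = k <;>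
    simp [hak]
  all_goals first
    | rcases Umat_eq_one_or_neg_one hak with h | h <;> simp [h]
    | rcases Umat_eq_one_or_neg_one (Ne.symm hak) with h | h <;> simp [h]

lemma sum_Hmat_row_eq_zero (hF : ringChar F ≠ 2) {i : Option F ⊕ Option F}
    (hi : i ≠ Sum.inl none) : ∑ j, Hmat F i j = 0 := by
  rcases i with (_ | a) | (_ | a)
  · exact absurd rfl hi
  all_goals simp only [Fintype.sum_sum_type, Hmat_inl_inl, Hmat_inl_inr, Hmat_inr_inl, Hmat_inr_inr,
    sum_add_distrib, sum_sub_distrib, sum_ite_eq, mem_univ, if_true]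
  · rw [sum_Umat_col_some hF, sum_Umat_row_some hF]; ring
  · rw [sum_Umat_col_none, sum_Umat_row_none]; ring
  · rw [sum_Umat_col_some hF, sum_Umat_row_some hF]; ring

end PlessMatrix

section Mod3
variable {F : Type} [Field F] [Fintype F] [DecidableEq F]

variable (F) in
def HmatMod3 : Matrix (Option F ⊕ Option F) (Option F ⊕ Option F) (ZMod 3) :=
  (Hmat F).map (Int.cast : ℤ → ZMod 3)

variable (F) in
/-- The rows of `(-U_qᵀ | I)`. -/
def dualGenRowL (a : Option F) : (Option F ⊕ Option F) → ZMod 3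
  | Sum.inl k => ((-Umat F k a : ℤ) : ZMod 3)
  | Sum.inr k => if a = k then 1 else 0

/-- Since `U_qᵀ U_q = q I = -I` over `GF(3)`, `(-U_qᵀ) (I | U_q) = (-U_qᵀ | I)`. -/
lemma dualGenRowL_mem_Lcode (hF : ringChar F ≠ 2) (h3 : (Fintype.card F : ZMod 3) = 2)
    (a : Option F) : dualGenRowL F a ∈ Lcode F := by
  suffices dualGenRowL F a = ∑ i, ((-Umat F i a : ℤ) : ZMod 3) • genRowL F i from
    this ▸ sum_mem fun i _ => Submodule.smul_mem _ _ (Submodule.subset_span ⟨i, rfl⟩)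
  ext (k | k)
  · simp [dualGenRowL, genRowL]
  · have hUU := congrArg (Int.cast : ℤ → ZMod 3) (congrFun₂ (transpose_Umat_mul_Umat hF) a k)
    simp only [mul_apply, transpose_apply, Matrix.smul_apply, one_apply, Int.cast_sum, Int.cast_mul] at hUU
    simp only [dualGenRowL, genRowL, Int.cast_neg, neg_smul, Finset.sum_apply, Pi.neg_apply,
      Pi.smul_apply, smul_eq_mul, sum_neg_distrib, hUU, mul_ite, mul_one,
      mul_zero, Int.cast_ite, Int.cast_natCast, Int.cast_zero, h3]
    split_ifs <;> decide

lemma HmatMod3_inl (a : Option F) : HmatMod3 F (Sum.inl a) = genRowL F a + dualGenRowL F a := by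
  ext (k | k) <;> simp [HmatMod3, genRowL, dualGenRowL, sub_eq_add_neg]

lemma HmatMod3_inr (a : Option F) : HmatMod3 F (Sum.inr a) = genRowL F a - dualGenRowL F a := by
  ext (k | k) <;> simp [HmatMod3, genRowL, dualGenRowL, sub_eq_add_neg]

lemma HmatMod3_inl_none : HmatMod3 F (Sum.inl none) = 1 := by
  ext ((_ | b) | (_ | b)) <;> simp [HmatMod3]

lemma HmatMod3_row_mem_Lcode (hF : ringChar F ≠ 2) (h3 : (Fintype.card F : ZMod 3) = 2)
    (i : Option F ⊕ Option F) : HmatMod3 F i ∈ Lcode F := by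
  have hgen (a : Option F) : genRowL F a ∈ Lcode F := Submodule.subset_span ⟨a, rfl⟩
  rcases i with a | a
  · rw [HmatMod3_inl]; exact add_mem (hgen a) (dualGenRowL_mem_Lcode hF h3 a)
  · rw [HmatMod3_inr]; exact sub_mem (hgen a) (dualGenRowL_mem_Lcode hF h3 a)

lemma dvec_eq_smul_HmatMod3 (s : Bool) (i : Option F ⊕ Option F) :
    dvec F s i = (if s then 1 else -1 : ZMod 3) • HmatMod3 F i + (2 : ZMod 3) • 1 := by
  ext j; cases s <;> simp [dvec, HmatMod3]

lemma dvec_true_add_dvec_false (i : Option F ⊕ Option F) : dvec F true i + dvec F false i = 1 := by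
  ext j
  simp only [dvec, Pi.add_apply, Pi.one_apply, if_true, Bool.false_eq_true, if_false]
  ring_nf
  reduce_mod_char

lemma one_mem_Lcode (hF : ringChar F ≠ 2) (h3 : (Fintype.card F : ZMod 3) = 2) :
    (1 : (Option F ⊕ Option F) → ZMod 3) ∈ Lcode F :=
  HmatMod3_inl_none (F := F) ▸ HmatMod3_row_mem_Lcode hF h3 _

lemma dvec_mem_Lcode (hF : ringChar F ≠ 2) (h3 : (Fintype.card F : ZMod 3) = 2)
    (s : Bool) (i : Option F ⊕ Option F) : dvec F s i ∈ Lcode F := by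
  rw [dvec_eq_smul_HmatMod3]
  exact add_mem (Submodule.smul_mem _ _ (HmatMod3_row_mem_Lcode hF h3 i))
    (Submodule.smul_mem _ _ (one_mem_Lcode hF h3))

lemma span_dvec_eq_Lcode (hF : ringChar F ≠ 2) (h3 : (Fintype.card F : ZMod 3) = 2) :
    Submodule.span (ZMod 3) {v | ∃ (s : Bool) (i : Option F ⊕ Option F),
      i ≠ Sum.inl none ∧ v = dvec F s i} = Lcode F := by
  set D := Submodule.span (ZMod 3) {v | ∃ (s : Bool) (i : Option F ⊕ Option F),
      i ≠ Sum.inl none ∧ v = dvec F s i}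
  refine le_antisymm (Submodule.span_le.2 ?_) (Submodule.span_le.2 ?_)
  · rintro v ⟨s, i, -, rfl⟩
    exact dvec_mem_Lcode hF h3 s i
  have hdvec (s : Bool) {i} (hi : i ≠ Sum.inl none) : dvec F s i ∈ D :=
    Submodule.subset_span ⟨s, i, hi, rfl⟩
  have hone : (1 : (Option F ⊕ Option F) → ZMod 3) ∈ D := by
    rw [← dvec_true_add_dvec_false (Sum.inr none)]
    exact add_mem (hdvec true Sum.inr_ne_inl) (hdvec false Sum.inr_ne_inl)
  have hrow (i : Option F ⊕ Option F) : HmatMod3 F i ∈ D := by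
    by_cases hi : i = Sum.inl none
    · exact hi ▸ HmatMod3_inl_none (F := F) ▸ hone
    · have : HmatMod3 F i = dvec F true i - (2 : ZMod 3) • 1 := by
        simp [dvec_eq_smul_HmatMod3]
      rw [this]
      exact sub_mem (hdvec true hi) (Submodule.smul_mem _ _ hone)
  rintro _ ⟨a, rfl⟩
  have : genRowL F a = (2 : ZMod 3) • (HmatMod3 F (Sum.inl a) + HmatMod3 F (Sum.inr a)) := by
    ext j
    simp only [HmatMod3_inl, HmatMod3_inr, Pi.smul_apply, Pi.add_apply, Pi.sub_apply, smul_eq_mul]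
    ring_nf
    reduce_mod_char
  rw [this]
  exact Submodule.smul_mem _ _ (add_mem (hrow _) (hrow _))

lemma dvec_apply_eq_zero_or_one (s : Bool) (i j : Option F ⊕ Option F) :
    dvec F s i j = 0 ∨ dvec F s i j = 1 := by
  rcases Hmat_eq_one_or_neg_one i j with h | h <;> cases s <;> simp [dvec, h] <;> decide

lemma card_support_dvec (hF : ringChar F ≠ 2) (s : Bool) {i : Option F ⊕ Option F}
    (hi : i ≠ Sum.inl none) : #{j | dvec F s i j ≠ 0} = Fintype.card F + 1 := by
  have hsupp : #{j | dvec F s i j ≠ 0} = #{j | Hmat F i j = if s then -1 else 1} := by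
    congr 1
    refine filter_congr fun j _ => ?_
    rcases Hmat_eq_one_or_neg_one i j with h | h <;> cases s <;> simp [dvec, h] <;> decide
  have := two_mul_card_filter_eq_of_sum_eq_zero (Hmat_eq_one_or_neg_one i)
    (sum_Hmat_row_eq_zero hF hi) (c := if s then -1 else 1) (by cases s <;> simp)
  simp only [Fintype.card_sum, Fintype.card_option] at this
  omega

end Mod3

/-- For `q ∈ {5, 11, 17, 23}`, the code `L(q)` is spanned over `GF(3)` by its
`(0,1)`-codewords of weight `q+1`; equivalently, the `GF(3)`-row span of the
block-by-point incidence matrix of the Hadamard 3-design `D(q)` (whose rows are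
the vectors `r + 2·1̄`) equals `L(q)`. -/
theorem stmt_9 (q : ℕ) (hq : q = 5 ∨ q = 11 ∨ q = 17 ∨ q = 23)
    (F : Type) [Field F] [Fintype F] [DecidableEq F] (hF : Fintype.card F = q) :
    Submodule.span (ZMod 3) {v : (Option F ⊕ Option F) → ZMod 3 | v ∈ Lcode F ∧
      (∀ j, v j = 0 ∨ v j = 1) ∧
      (Finset.univ.filter (fun j => v j ≠ 0)).card = q + 1} = Lcode F ∧
    Submodule.span (ZMod 3) {v : (Option F ⊕ Option F) → ZMod 3 |
      ∃ (s : Bool) (i : Option F ⊕ Option F), i ≠ Sum.inl none ∧ v = dvec F s i} =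
      Lcode F := by
  have hchar : ringChar F ≠ 2 := fun h => by
    have := FiniteField.even_card_of_char_two h
    rcases hq with rfl | rfl | rfl | rfl <;> omega
  have h3 : (Fintype.card F : ZMod 3) = 2 := by
    rw [hF]; rcases hq with rfl | rfl | rfl | rfl <;> decide
  have hD := span_dvec_eq_Lcode hchar h3
  refine ⟨le_antisymm (Submodule.span_le.2 fun v hv => hv.1) ?_, hD⟩
  refine hD.ge.trans (Submodule.span_mono ?_)
  rintro v ⟨s, i, hi, rfl⟩
  exact ⟨dvec_mem_Lcode hchar h3 s i, dvec_apply_eq_zero_or_one s i,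
    by rw [card_support_dvec hchar s hi, hF]⟩
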